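/- arXiv:1311.5068 — 7 statements merged into one kernel-verified Lean document; each statement's English description precedes it below -/
import Mathlib

section
/- Let (X,d_X) and (Y,d_Y) be finite metric spaces, let τ ⊆ X × Y be a correspondence, and let η ≥ 0 be such that |d_X(x,x') − d_Y(y,y')| ≤ η for all (x,y), (x',y') ∈ τ. Then |u_SL^X(x,x') − u_SL^Y(y,y')| ≤ η for all (x,y), (x',y') ∈ τ, where u_SL^X and u_SL^Y are the single-linkage ultrametrics of X and Y. -/
/-- A distance function `d` is a metric. -/
def IsMetric {X : Type*} (d : X → X → ℝ) : Prop :=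
  (∀ x y, d x y = d y x) ∧ (∀ x y, d x y = 0 ↔ x = y) ∧ (∀ x y z, d x z ≤ d x y + d y z)

/-- A distance function is an ultrametric: a metric satisfying the strong triangle
inequality. -/
def IsUltrametricD {X : Type*} (d : X → X → ℝ) : Prop :=
  IsMetric d ∧ ∀ x y z, d x z ≤ max (d x y) (d y z)

/-- The maximum of the consecutive distances along the chain `x :: l ++ [y]`. -/
def chainMax {X : Type*} (d : X → X → ℝ) : X → List X → X → ℝ
  | x, [], y => d x y
  | x, z :: l, y => max (d x z) (chainMax d z l y)

/-- The single-linkage ultrametric: the minimum over all chains from `x` to `y`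
of the maximum of the consecutive distances along the chain. -/
noncomputable def uSL {X : Type*} (d : X → X → ℝ) (x y : X) : ℝ :=
  sInf { r | ∃ l : List X, chainMax d x l y = r }

/-- A correspondence between `X` and `Y`: every point of `X` and every point of `Y`
occurs in some pair. -/
def IsCorr {X Y : Type*} (τ : Set (X × Y)) : Prop :=
  (∀ x, ∃ y, (x, y) ∈ τ) ∧ (∀ y, ∃ x, (x, y) ∈ τ)

/-- The distortion of a correspondence: the supremum of `|d_X(x,x') − d_Y(y,y')|`
over pairs `(x,y), (x',y')` in the correspondence. -/
noncomputable def corrDist {X Y : Type*} (dX : X → X → ℝ) (dY : Y → Y → ℝ)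
    (τ : Set (X × Y)) : ℝ :=
  sSup { v | ∃ p ∈ τ, ∃ q ∈ τ, v = |dX p.1 q.1 - dY p.2 q.2| }

/-- The Gromov–Hausdorff distance: half the infimum over correspondences of their
distortion. -/
noncomputable def ghDist {X Y : Type*} (dX : X → X → ℝ) (dY : Y → Y → ℝ) : ℝ :=
  (1 / 2) * sInf { r | ∃ τ : Set (X × Y), IsCorr τ ∧ corrDist dX dY τ = r }

/-- Single linkage value between two blocks: minimal cross distance. -/
noncomputable def ellSL {X : Type*} (d : X → X → ℝ) (A B : Finset X) : ℝ :=
  sInf { r | ∃ a ∈ A, ∃ b ∈ B, d a b = r }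

/-- Complete linkage value between two blocks: maximal cross distance. -/
noncomputable def ellCL {X : Type*} (d : X → X → ℝ) (A B : Finset X) : ℝ :=
  sSup { r | ∃ a ∈ A, ∃ b ∈ B, d a b = r }

/-- Average linkage value between two blocks: average cross distance. -/
noncomputable def ellAL {X : Type*} (d : X → X → ℝ) (A B : Finset X) : ℝ :=
  (∑ a ∈ A, ∑ b ∈ B, d a b) / (A.card * B.card)

/-
Pushing a chain `x = x₀, …, xₙ = x'` of `X` through the correspondence, by choosing a partner of
each interior point, gives a chain from `y` to `y'` in `Y` each of whose links is at most `η`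
longer than the corresponding link in `X`. So its largest link is at most `η` longer, whence
`u_SL^Y(y,y') ≤ u_SL^X(x,x') + η`; the other inequality is symmetric.
-/

lemma IsMetric.nonneg {X : Type*} {d : X → X → ℝ} (hd : IsMetric d) (x y : X) :
    0 ≤ d x y := by
  have h := hd.2.2 x y x
  rw [(hd.2.1 x x).2 rfl, hd.1 y x] at h
  linarith

section Chains

variable {X : Type*} {d : X → X → ℝ}

lemma chainMax_nonneg (hd : ∀ x y, 0 ≤ d x y) :
    ∀ (x : X) (l : List X) (y : X), 0 ≤ chainMax d x l y
  | x, [], y => hd x y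
  | x, z :: _, _ => (hd x z).trans (le_max_left _ _)

lemma uSL_le_chainMax (hd : ∀ x y, 0 ≤ d x y) (x : X) (l : List X) (y : X) :
    uSL d x y ≤ chainMax d x l y :=
  csInf_le ⟨0, by rintro _ ⟨l', rfl⟩; exact chainMax_nonneg hd x l' y⟩ ⟨l, rfl⟩

lemma le_uSL {x y : X} {r : ℝ} (h : ∀ l, r ≤ chainMax d x l y) : r ≤ uSL d x y :=
  le_csInf ⟨d x y, [], rfl⟩ (by rintro _ ⟨l, rfl⟩; exact h l)

end Chains

section Relation

variable {X Y : Type*} {dX : X → X → ℝ} {dY : Y → Y → ℝ} {R : X → Y → Prop} {η : ℝ}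

lemma chainMax_map_le (hR : ∀ x y, R x y → ∀ x' y', R x' y' → dY y y' ≤ dX x x' + η)
    {f : X → Y} (hf : ∀ z, R z (f z)) :
    ∀ (l : List X) {x : X} {y : Y} {x' : X} {y' : Y}, R x y → R x' y' →
      chainMax dY y (l.map f) y' ≤ chainMax dX x l x' + η
  | [], _, _, _, _, hxy, hxy' => hR _ _ hxy _ _ hxy'
  | z :: l, _, _, _, _, hxy, hxy' =>
    max_le ((hR _ _ hxy z (f z) (hf z)).trans (by gcongr; exact le_max_left _ _))
      ((chainMax_map_le hR hf l (hf z) hxy').trans (by gcongr; exact le_max_right _ _))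

lemma uSL_le_uSL_add (hdY : ∀ y y', 0 ≤ dY y y') (hR_total : ∀ x, ∃ y, R x y)
    (hR : ∀ x y, R x y → ∀ x' y', R x' y' → dY y y' ≤ dX x x' + η)
    {x : X} {y : Y} {x' : X} {y' : Y} (hxy : R x y) (hxy' : R x' y') :
    uSL dY y y' ≤ uSL dX x x' + η := by
  choose f hf using hR_total
  have h : uSL dY y y' - η ≤ uSL dX x x' := le_uSL fun l => by
    linarith [uSL_le_chainMax hdY y (l.map f) y', chainMax_map_le hR hf l hxy hxy']
  linarith

end Relation

theorem stmt3_general {X Y : Type*}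
    (dX : X → X → ℝ) (dY : Y → Y → ℝ) (hdX : IsMetric dX) (hdY : IsMetric dY)
    (τ : Set (X × Y)) (hτ : IsCorr τ) (η : ℝ)
    (h : ∀ p ∈ τ, ∀ q ∈ τ, |dX p.1 q.1 - dY p.2 q.2| ≤ η) :
    ∀ p ∈ τ, ∀ q ∈ τ, |uSL dX p.1 q.1 - uSL dY p.2 q.2| ≤ η := by
  intro p hp q hq
  have hXY : uSL dY p.2 q.2 ≤ uSL dX p.1 q.1 + η :=
    uSL_le_uSL_add (R := fun x y => (x, y) ∈ τ) hdY.nonneg hτ.1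
      (fun x y hxy x' y' hxy' => by linarith [abs_sub_le_iff.1 (h _ hxy _ hxy')]) hp hq
  have hYX : uSL dX p.1 q.1 ≤ uSL dY p.2 q.2 + η :=
    uSL_le_uSL_add (R := fun y x => (x, y) ∈ τ) hdX.nonneg hτ.2
      (fun y x hxy y' x' hxy' => by linarith [abs_sub_le_iff.1 (h _ hxy _ hxy')]) hp hq
  exact abs_sub_le_iff.2 ⟨by linarith, by linarith⟩

/-- if a correspondence between two finite metric spaces has distortion
at most `η`, then it also has distortion at most `η` for the corresponding
single-linkage ultrametrics. -/
theorem stmt3 {X Y : Type*} [Fintype X] [Fintype Y]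
    (dX : X → X → ℝ) (dY : Y → Y → ℝ) (hdX : IsMetric dX) (hdY : IsMetric dY)
    (τ : Set (X × Y)) (hτ : IsCorr τ) (η : ℝ) (hη : 0 ≤ η)
    (h : ∀ p ∈ τ, ∀ q ∈ τ, |dX p.1 q.1 - dY p.2 q.2| ≤ η) :
    ∀ p ∈ τ, ∀ q ∈ τ, |uSL dX p.1 q.1 - uSL dY p.2 q.2| ≤ η :=
  stmt3_general dX dY hdX hdY τ hτ η h
end

section
/- Let (X,d) be a finite metric space, let (U,u) be an ultrametric space, let ε > 0, and suppose there exists a correspondence τ ⊆ X × U such that |d(x,x') − u(y,y')| < ε for all (x,y), (x',y') ∈ τ (this holds in particular whenever d_GH((X,d),(U,u)) < ε/2). Then the set of distance values {u(y,y') : y, y' ∈ U, u(y,y') > ε} is finite. -/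
/-!
Choose a partner `f x ∈ U` of every `x ∈ X`. If `u y y' > ε` and `x, x'` correspond to `y, y'`,
then `f x, f x'` lie within `ε` of `y, y'`, and in an ultrametric space such perturbations cannot
change a distance exceeding `ε`; hence `u y y' = u (f x) (f x')`, a value from the finite
family indexed by `X × X`.
-/

theorem IsUltrametricD.dist_eq_of_dist_lt {U : Type*} {u : U → U → ℝ} (hu : IsUltrametricD u)
    {x y z : U} (h : u x z < u x y) : u z y = u x y := by
  apply le_antisymm
  · calc u z y ≤ max (u z x) (u x y) := hu.2 z x y
      _ = u x y := by rw [hu.1.1 z x, max_eq_right h.le]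
  · have := hu.2 x z y
    rw [le_max_iff] at this
    exact this.resolve_left h.not_ge

theorem IsUltrametricD.dist_eq_of_lt_of_lt {U : Type*} {u : U → U → ℝ}
    (hu : IsUltrametricD u) {y y' z z' : U} {ε : ℝ} (hyz : u y z < ε) (hy'z' : u y' z' < ε)
    (hyy' : ε < u y y') : u z z' = u y y' := by
  have hzy' : u z y' = u y y' := hu.dist_eq_of_dist_lt (hyz.trans hyy')
  have hy'z : u y' z = u y y' := by rw [hu.1.1, hzy']
  rw [hu.1.1, hu.dist_eq_of_dist_lt (hy'z ▸ hy'z'.trans hyy'), hy'z]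

theorem dist_lt_of_mem_of_fst_eq {X U : Type*} {d : X → X → ℝ} (hd : IsMetric d)
    {u : U → U → ℝ} {ε : ℝ} {τ : Set (X × U)}
    (h : ∀ p ∈ τ, ∀ q ∈ τ, |d p.1 q.1 - u p.2 q.2| < ε)
    {x : X} {y y' : U} (hy : (x, y) ∈ τ) (hy' : (x, y') ∈ τ) : u y y' < ε := by
  have := h _ hy _ hy'
  rw [(hd.2.1 x x).2 rfl, zero_sub, abs_neg] at this
  exact (le_abs_self _).trans_lt this

theorem stmt6_general {X U : Type*} [Fintype X] (d : X → X → ℝ) (hd : IsMetric d)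
    (u : U → U → ℝ) (hu : IsUltrametricD u) (ε : ℝ)
    (τ : Set (X × U)) (hτ : IsCorr τ)
    (h : ∀ p ∈ τ, ∀ q ∈ τ, |d p.1 q.1 - u p.2 q.2| < ε) :
    { v : ℝ | ∃ y y' : U, u y y' = v ∧ ε < v }.Finite := by
  choose f hf using hτ.1
  refine (Set.finite_range fun p : X × X => u (f p.1) (f p.2)).subset ?_
  rintro v ⟨y, y', rfl, hv⟩
  obtain ⟨x, hx⟩ := hτ.2 y
  obtain ⟨x', hx'⟩ := hτ.2 y'
  exact ⟨(x, x'), hu.dist_eq_of_lt_of_lt (dist_lt_of_mem_of_fst_eq hd h hx (hf x))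
    (dist_lt_of_mem_of_fst_eq hd h hx' (hf x')) hv⟩

/-- if a finite metric space `(X,d)` admits a correspondence with an
ultrametric space `(U,u)` of distortion `< ε`, then `u` takes only finitely many
values above `ε`. -/
theorem stmt6 {X U : Type*} [Fintype X] (d : X → X → ℝ) (hd : IsMetric d)
    (u : U → U → ℝ) (hu : IsUltrametricD u) (ε : ℝ) (hε : 0 < ε)
    (τ : Set (X × U)) (hτ : IsCorr τ)
    (h : ∀ p ∈ τ, ∀ q ∈ τ, |d p.1 q.1 - u p.2 q.2| < ε) :
    { v : ℝ | ∃ y y' : U, u y y' = v ∧ ε < v }.Finite :=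
  stmt6_general d hd u hu ε τ hτ h
end

section
/- Let (X,d_0) be a finite metric space, let B ⊆ X be such that B and X∖B are both nonempty, let R > 0, and let d_t (t ∈ [0,1)) be the interpolated distances. Let I(R) denote the two-point metric space with distance R between its points. Then for every t ∈ [0,1), d_GH((X,d_t), I(R)) ≤ (1/2)·(1−t)·(diam(X,d_0) + R). Consequently the path Γ: [0,1] → (finite metric spaces, d_GH) with Γ(t) = (X,d_t) for t < 1 and Γ(1) = I(R) is continuous. -/
/-- Diameter of a distance function: the supremum of its values. -/
noncomputable def metricDiam {X : Type*} (d : X → X → ℝ) : ℝ :=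
  sSup { r | ∃ x y, d x y = r }

open Classical in
/-- The interpolated distance `d_t` of the path `Γ^{B,Bᶜ}_R`:
`d_t(x,y) = (1−t)d₀(x,y)` if `x,y` lie in the same block (`B` or `Bᶜ`), and
`d_t(x,y) = (1−t)d₀(x,y) + tR` otherwise. -/
noncomputable def dInterp {X : Type*} (d0 : X → X → ℝ) (B : Set X) (R t : ℝ)
    (x y : X) : ℝ :=
  if x ∈ B ↔ y ∈ B then (1 - t) * d0 x y else (1 - t) * d0 x y + t * R

/-
The two-point space is `(X, d₁)` with each block collapsed to a point, and `t ↦ d_t` is affine: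
`d_t − d_s = (t − s)(d₁ − d₀)`, where `|d₁ − d₀| ≤ diam(X,d₀) + R`. Matching every point to itself,
or to its block, is therefore a correspondence of distortion at most `|t − s|(diam(X,d₀) + R)`,
so the path is Lipschitz for the Gromov–Hausdorff distance.
-/

lemma corrDist_nonneg {X Y : Type*} (dX : X → X → ℝ) (dY : Y → Y → ℝ) (τ : Set (X × Y)) :
    0 ≤ corrDist dX dY τ :=
  Real.sSup_nonneg fun _ ⟨_, _, _, _, hv⟩ => hv ▸ abs_nonneg _

lemma ghDist_le_corrDist {X Y : Type*} (dX : X → X → ℝ) (dY : Y → Y → ℝ) {τ : Set (X × Y)}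
    (hτ : IsCorr τ) : ghDist dX dY ≤ corrDist dX dY τ / 2 := by
  have hle : sInf {r | ∃ τ : Set (X × Y), IsCorr τ ∧ corrDist dX dY τ = r} ≤ corrDist dX dY τ :=
    csInf_le ⟨0, fun _ ⟨τ', _, hr⟩ => hr ▸ corrDist_nonneg dX dY τ'⟩ ⟨τ, hτ, rfl⟩
  rw [ghDist]
  linarith

lemma isCorr_graph {X Y : Type*} {f : X → Y} (hf : Function.Surjective f) :
    IsCorr {p : X × Y | f p.1 = p.2} :=
  ⟨fun x => ⟨f x, rfl⟩, hf⟩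

lemma ghDist_le_of_surjective {X Y : Type*} (dX : X → X → ℝ) (dY : Y → Y → ℝ) {f : X → Y}
    (hf : Function.Surjective f) {M : ℝ} (hM : 0 ≤ M)
    (h : ∀ x x', |dX x x' - dY (f x) (f x')| ≤ M) : ghDist dX dY ≤ M / 2 := by
  have hdist : corrDist dX dY {p : X × Y | f p.1 = p.2} ≤ M := by
    refine Real.sSup_le ?_ hM
    rintro v ⟨⟨x, y⟩, hxy, ⟨x', y'⟩, hxy', rfl⟩
    obtain rfl : f x = y := hxy
    obtain rfl : f x' = y' := hxy'
    exact h x x'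
  linarith [ghDist_le_corrDist dX dY (isCorr_graph hf)]

lemma le_metricDiam {X : Type*} [Finite X] (d : X → X → ℝ) (x y : X) : d x y ≤ metricDiam d := by
  refine le_csSup ?_ ⟨x, y, rfl⟩
  convert (Set.finite_range fun p : X × X => d p.1 p.2).bddAbove
  ext r
  simp [eq_comm]

lemma metricDiam_nonneg {X : Type*} {d : X → X → ℝ} (hd : IsMetric d) : 0 ≤ metricDiam d :=
  Real.sSup_nonneg fun _ ⟨x, y, hr⟩ => hr ▸ hd.nonneg x y

section Interpolation

variable {X : Type*} (d0 : X → X → ℝ) (B : Set X) (R : ℝ)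

open Classical in
lemma dInterp_one (x y : X) :
    dInterp d0 B R 1 x y = if x ∈ B ↔ y ∈ B then 0 else R := by
  unfold dInterp
  split_ifs <;> ring

lemma dInterp_sub_dInterp (t s : ℝ) (x y : X) :
    dInterp d0 B R t x y - dInterp d0 B R s x y = (t - s) * (dInterp d0 B R 1 x y - d0 x y) := by
  unfold dInterp
  split_ifs <;> ring

variable [Finite X] {d0} (hd0 : IsMetric d0) {R} (hR : 0 ≤ R)
include hd0 hR

lemma abs_dInterp_sub_dInterp_le (t s : ℝ) (x y : X) :
    |dInterp d0 B R t x y - dInterp d0 B R s x y| ≤ |t - s| * (metricDiam d0 + R) := by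
  have hd : |dInterp d0 B R 1 x y - d0 x y| ≤ metricDiam d0 + R := by
    have := hd0.nonneg x y
    have := le_metricDiam d0 x y
    rw [dInterp_one, abs_le]
    split_ifs <;> constructor <;> linarith
  rw [dInterp_sub_dInterp, abs_mul]
  exact mul_le_mul_of_nonneg_left hd (abs_nonneg _)

lemma ghDist_dInterp_le (t s : ℝ) :
    ghDist (dInterp d0 B R t) (dInterp d0 B R s) ≤ |t - s| * (metricDiam d0 + R) / 2 :=
  ghDist_le_of_surjective _ _ Function.surjective_id
    (by have := metricDiam_nonneg hd0; positivity) (abs_dInterp_sub_dInterp_le B hd0 hR t s)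

lemma ghDist_dInterp_le_two_point (hB : B.Nonempty) (hBc : Bᶜ.Nonempty)
    {dTwo : Fin 2 → Fin 2 → ℝ} (hdTwo : ∀ i j, dTwo i j = if i = j then 0 else R) (t : ℝ) :
    ghDist (dInterp d0 B R t) dTwo ≤ |t - 1| * (metricDiam d0 + R) / 2 := by
  classical
  let block : X → Fin 2 := fun x => if x ∈ B then 0 else 1
  have hblock : Function.Surjective block := by
    intro i
    fin_cases i
    · obtain ⟨b, hb⟩ := hB
      exact ⟨b, if_pos hb⟩
    · obtain ⟨c, hc⟩ := hBc
      exact ⟨c, if_neg hc⟩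
  have hcollapse : ∀ x y, dTwo (block x) (block y) = dInterp d0 B R 1 x y := by
    intro x y
    rw [hdTwo, dInterp_one]
    by_cases hx : x ∈ B <;> by_cases hy : y ∈ B <;> simp [block, hx, hy]
  refine ghDist_le_of_surjective _ _ hblock (by have := metricDiam_nonneg hd0; positivity) ?_
  intro x y
  rw [hcollapse]
  exact abs_dInterp_sub_dInterp_le B hd0 hR t 1 x y

lemma ghDist_path_le (hB : B.Nonempty) (hBc : Bᶜ.Nonempty)
    {dTwo : Fin 2 → Fin 2 → ℝ} (hdTwo : ∀ i j, dTwo i j = if i = j then 0 else R)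
    {g : ℝ → ℝ → ℝ}
    (hg : ∀ s ∈ Set.Ico (0 : ℝ) 1, ∀ s' ∈ Set.Ico (0 : ℝ) 1,
      g s s' = ghDist (dInterp d0 B R s) (dInterp d0 B R s'))
    (hg_one : ∀ s ∈ Set.Ico (0 : ℝ) 1,
      g s 1 = ghDist (dInterp d0 B R s) dTwo ∧ g 1 s = ghDist (dInterp d0 B R s) dTwo)
    (hg_one_one : g 1 1 = 0) {s s' : ℝ} (hs : s ∈ Set.Icc (0 : ℝ) 1)
    (hs' : s' ∈ Set.Icc (0 : ℝ) 1) :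
    g s s' ≤ |s - s'| * (metricDiam d0 + R) / 2 := by
  rcases hs.2.eq_or_lt with rfl | hs1 <;> rcases hs'.2.eq_or_lt with rfl | hs'1
  · simp [hg_one_one]
  · rw [(hg_one s' ⟨hs'.1, hs'1⟩).2, abs_sub_comm]
    exact ghDist_dInterp_le_two_point B hd0 hR hB hBc hdTwo s'
  · rw [(hg_one s ⟨hs.1, hs1⟩).1]
    exact ghDist_dInterp_le_two_point B hd0 hR hB hBc hdTwo s
  · rw [hg s ⟨hs.1, hs1⟩ s' ⟨hs'.1, hs'1⟩]
    exact ghDist_dInterp_le B hd0 hR s s'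

end Interpolation

theorem stmt9_general {X : Type*} [Fintype X] (d0 : X → X → ℝ) (hd0 : IsMetric d0)
    (B : Set X) (hB : B.Nonempty) (hBc : Bᶜ.Nonempty) (R : ℝ) (hR : 0 < R)
    (dTwo : Fin 2 → Fin 2 → ℝ) (hdTwo : ∀ i j, dTwo i j = if i = j then 0 else R) :
    (∀ t, 0 ≤ t → t < 1 →
      ghDist (dInterp d0 B R t) dTwo ≤ (1 / 2) * (1 - t) * (metricDiam d0 + R)) ∧
    (∀ g : ℝ → ℝ → ℝ,
      (∀ s ∈ Set.Ico (0 : ℝ) 1, ∀ s' ∈ Set.Ico (0 : ℝ) 1,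
        g s s' = ghDist (dInterp d0 B R s) (dInterp d0 B R s')) →
      (∀ s ∈ Set.Ico (0 : ℝ) 1,
        g s 1 = ghDist (dInterp d0 B R s) dTwo ∧ g 1 s = ghDist (dInterp d0 B R s) dTwo) →
      g 1 1 = 0 →
      ∀ s ∈ Set.Icc (0 : ℝ) 1, ∀ ε > 0, ∃ δ > 0,
        ∀ s' ∈ Set.Icc (0 : ℝ) 1, |s' - s| < δ → g s s' < ε) := by
  refine ⟨fun t _ ht1 => ?_, fun g hg hg_one hg_one_one s hs ε hε => ?_⟩
  · calc ghDist (dInterp d0 B R t) dTwo ≤ |t - 1| * (metricDiam d0 + R) / 2 :=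
          ghDist_dInterp_le_two_point B hd0 hR.le hB hBc hdTwo t
      _ = (1 / 2) * (1 - t) * (metricDiam d0 + R) := by
          rw [abs_of_neg (by linarith)]
          ring
  · set C := (metricDiam d0 + R) / 2
    have hC : 0 < C := by have := metricDiam_nonneg hd0; positivity
    refine ⟨ε / C, by positivity, fun s' hs' hss' => ?_⟩
    calc g s s' ≤ |s' - s| * C := by
          rw [abs_sub_comm]
          exact (ghDist_path_le B hd0 hR.le hB hBc hdTwo hg hg_one hg_one_one hs hs').trans_eq
            (mul_div_assoc _ _ _)
      _ < ε / C * C := by gcongr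
      _ = ε := div_mul_cancel₀ ε hC.ne'

/-- along the interpolation `Γ^{B,Bᶜ}_R`, the Gromov–Hausdorff distance
between `(X,d_t)` and the two-point space `I(R)` is at most `½(1−t)(diam(X,d₀)+R)`;
consequently, the path `Γ` (given by `Γ(t) = (X,d_t)` for `t < 1` and `Γ(1) = I(R)`)
is continuous into the finite metric spaces with the Gromov–Hausdorff metric, here
expressed via any function `g` recording the pairwise Gromov–Hausdorff distances of
the points of the path. -/
theorem stmt9 {X : Type*} [Fintype X] [Nonempty X] (d0 : X → X → ℝ) (hd0 : IsMetric d0)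
    (B : Set X) (hB : B.Nonempty) (hBc : Bᶜ.Nonempty) (R : ℝ) (hR : 0 < R)
    (dTwo : Fin 2 → Fin 2 → ℝ) (hdTwo : ∀ i j, dTwo i j = if i = j then 0 else R) :
    (∀ t, 0 ≤ t → t < 1 →
      ghDist (dInterp d0 B R t) dTwo ≤ (1 / 2) * (1 - t) * (metricDiam d0 + R)) ∧
    (∀ g : ℝ → ℝ → ℝ,
      (∀ s ∈ Set.Ico (0 : ℝ) 1, ∀ s' ∈ Set.Ico (0 : ℝ) 1,
        g s s' = ghDist (dInterp d0 B R s) (dInterp d0 B R s')) →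
      (∀ s ∈ Set.Ico (0 : ℝ) 1,
        g s 1 = ghDist (dInterp d0 B R s) dTwo ∧ g 1 s = ghDist (dInterp d0 B R s) dTwo) →
      g 1 1 = 0 →
      ∀ s ∈ Set.Icc (0 : ℝ) 1, ∀ ε > 0, ∃ δ > 0,
        ∀ s' ∈ Set.Icc (0 : ℝ) 1, |s' - s| < δ → g s s' < ε) :=
  stmt9_general d0 hd0 B hB hBc R hR dTwo hdTwo
end

section
/- Let (X,d) be a finite metric space partitioned into nonempty disjoint subsets B_1 and B_2, let b_1 ∈ B_1 and b_2 ∈ B_2 with R := d(b_1,b_2) > 0, and let δ ≥ 0. For t ∈ [0,1), define d_t on X by: d_t(x,y) = (1−t)d(x,y) if x,y ∈ B_1∖{b_1} or x,y ∈ B_2∖{b_2}; d_t(x,y) = (1−t)d(x,y) + tδ if one of x,y equals b_i and the other lies in B_i∖{b_i} (i = 1,2); d_t(b_1,b_2) = R; d_t(x,y) = (1−t)d(x,y) + t(R+δ) if exactly one of x,y lies in {b_1,b_2} and the other lies in the opposite block minus its bridge point; and d_t(x,y) = (1−t)d(x,y) + t(R+2δ) if x ∈ B_1∖{b_1} and y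 ∈ B_2∖{b_2} or vice versa. Then d_t is a metric on X for every t ∈ [0,1). -/
open Classical in
/-- The bridged interpolated distance `d_t` for a partition `B₁, B₁ᶜ` with bridge
points `b₁ ∈ B₁`, `b₂ ∈ B₁ᶜ` at scale `R = d(b₁,b₂)` and gap `δ`:
within a block minus its bridge point distances shrink by `(1−t)`; distances to the
own bridge point get `+tδ`; `d_t(b₁,b₂) = R`; cross distances involving exactly one
bridge point get `+t(R+δ)`; the remaining cross distances get `+t(R+2δ)`. -/
noncomputable def dBridge {X : Type*} (d : X → X → ℝ) (B1 : Set X) (b1 b2 : X)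
    (R δ t : ℝ) (x y : X) : ℝ :=
  if x = y then 0
  else if (x = b1 ∧ y = b2) ∨ (x = b2 ∧ y = b1) then R
  else if (x ∈ B1 ∧ y ∈ B1) ∨ (x ∉ B1 ∧ y ∉ B1) then
    if x = b1 ∨ y = b1 ∨ x = b2 ∨ y = b2 then (1 - t) * d x y + t * δ
    else (1 - t) * d x y
  else
    if x = b1 ∨ y = b1 ∨ x = b2 ∨ y = b2 then (1 - t) * d x y + t * (R + δ)
    else (1 - t) * d x y + t * (R + 2 * δ)

/-!
Place the four parts `B₁ ∖ {b₁}`, `b₁`, `b₂`, `B₂ ∖ {b₂}` at the heights `0`, `δ`, `δ + R`,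
`R + 2δ` on the real line. Then `d_t = (1 - t) d + t |h x - h y|` for this height function `h`
(on the pair `b₁, b₂` this uses `d b₁ b₂ = R`), and a positive multiple of a metric plus a
nonnegative multiple of a pseudometric pulled back from `ℝ` is again a metric.
-/

namespace IsMetric

variable {X : Type*} {d : X → X → ℝ}

lemma nonneg_s13 (hd : IsMetric d) (x y : X) : 0 ≤ d x y := by
  obtain ⟨hsymm, hzero, htri⟩ := hd
  linarith [htri x y x, (hzero x x).2 rfl, hsymm x y]

lemma mul_add_mul_dist {Y : Type*} [PseudoMetricSpace Y] (hd : IsMetric d) (f : X → Y)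
    {a b : ℝ} (ha : 0 < a) (hb : 0 ≤ b) :
    IsMetric fun x y => a * d x y + b * dist (f x) (f y) := by
  refine ⟨fun x y => ?_, fun x y => ⟨fun h => ?_, ?_⟩, fun x y z => ?_⟩
  · dsimp only
    rw [hd.1 x y, dist_comm]
  · have hdist := mul_nonneg hb (dist_nonneg (x := f x) (y := f y))
    have : a * d x y = 0 := by linarith [mul_nonneg ha.le (hd.nonneg_s13 x y)]
    exact (hd.2.1 x y).1 ((mul_eq_zero.1 this).resolve_left ha.ne')
  · rintro rfl
    simp [(hd.2.1 x x).2 rfl]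
  · nlinarith [hd.2.2 x y z, dist_triangle (f x) (f y) (f z)]

end IsMetric

section Bridge

variable {X : Type*} (B1 : Set X) (b1 b2 : X) (R δ : ℝ)

open Classical in
noncomputable def bridgeHeight (x : X) : ℝ :=
  if x = b1 then δ else if x = b2 then δ + R else if x ∈ B1 then 0 else R + 2 * δ

lemma dBridge_eq_mul_add_mul_dist {d : X → X → ℝ} (hd : IsMetric d) (t : ℝ)
    (hb1 : b1 ∈ B1) (hb2 : b2 ∈ B1ᶜ) (hR : d b1 b2 = R) (hR0 : 0 ≤ R) (hδ : 0 ≤ δ)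
    (x y : X) :
    dBridge d B1 b1 b2 R δ t x y =
      (1 - t) * d x y + t * dist (bridgeHeight B1 b1 b2 R δ x) (bridgeHeight B1 b1 b2 R δ y) := by
  have hR' : d b2 b1 = R := hd.1 b2 b1 ▸ hR
  by_cases hxy : x = y
  · subst hxy
    simp [dBridge, (hd.2.1 x x).2 rfl]
  have classify (z : X) :
      z = b1 ∨ z = b2 ∨ (z ≠ b1 ∧ z ≠ b2 ∧ z ∈ B1) ∨ (z ≠ b1 ∧ z ≠ b2 ∧ z ∉ B1) := by
    tauto
  rcases classify x with rfl | rfl | ⟨hx1, hx2, hx⟩ | ⟨hx1, hx2, hx⟩ <;>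
  rcases classify y with rfl | rfl | ⟨hy1, hy2, hy⟩ | ⟨hy1, hy2, hy⟩ <;>
  simp_all [dBridge, bridgeHeight, Real.dist_eq] <;>
  grind [abs_of_nonneg, abs_of_nonpos]

end Bridge

theorem stmt13_general {X : Type*} (d : X → X → ℝ) (hd : IsMetric d)
    (B1 : Set X)
    (b1 b2 : X) (hb1 : b1 ∈ B1) (hb2 : b2 ∈ B1ᶜ)
    (R : ℝ) (hR : d b1 b2 = R) (hRpos : 0 < R) (δ : ℝ) (hδ : 0 ≤ δ)
    (t : ℝ) (ht0 : 0 ≤ t) (ht1 : t < 1) :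
    IsMetric (dBridge d B1 b1 b2 R δ t) := by
  have hrepr : dBridge d B1 b1 b2 R δ t = fun x y =>
      (1 - t) * d x y + t * dist (bridgeHeight B1 b1 b2 R δ x) (bridgeHeight B1 b1 b2 R δ y) :=
    funext₂ (dBridge_eq_mul_add_mul_dist B1 b1 b2 R δ hd t hb1 hb2 hR hRpos.le hδ)
  rw [hrepr]
  exact hd.mul_add_mul_dist _ (sub_pos.2 ht1) ht0

/-- the bridged interpolated distance `d_t` is a metric for every
`t ∈ [0,1)`. -/
theorem stmt13 {X : Type*} [Fintype X] (d : X → X → ℝ) (hd : IsMetric d)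
    (B1 : Set X) (hB1 : B1.Nonempty) (hB2 : B1ᶜ.Nonempty)
    (b1 b2 : X) (hb1 : b1 ∈ B1) (hb2 : b2 ∈ B1ᶜ)
    (R : ℝ) (hR : d b1 b2 = R) (hRpos : 0 < R) (δ : ℝ) (hδ : 0 ≤ δ)
    (t : ℝ) (ht0 : 0 ≤ t) (ht1 : t < 1) :
    IsMetric (dBridge d B1 b1 b2 R δ t) :=
  stmt13_general d hd B1 b1 b2 hb1 hb2 R hR hRpos δ hδ t ht0 ht1
end

section
/- Let (X,d) be a finite metric space partitioned into nonempty disjoint subsets B_1 and B_2, let b_1 ∈ B_1 and b_2 ∈ B_2 with R := d(b_1,b_2) > 0, let δ ≥ 0, and assume additionally that d(x,y) ≥ R + δ for every pair (x,y) ∈ B_1 × B_2 with (x,y) ≠ (b_1,b_2). Let d_t (t ∈ [0,1)) be the bridged interpolated distance. Then for every t ∈ [0,1) and every (x,y) ∈ B_1 × B_2, either (x,y) = (b_1,b_2) and d_t(x,y) = R, or d_t(x,y) ≥ R + δ; in particular no cross distance d_t(x,y) lies strictly between R and R + δ. -/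
/-! Off the bridge pair, a cross distance of `d_t` is at least `(1 - t) d(x,y) + t (R + δ)`,
a convex combination of two numbers that are both at least `R + δ`. -/

section

variable {X : Type*} (d : X → X → ℝ) (B1 : Set X) (b1 b2 : X) (R δ t : ℝ)

theorem dBridge_bridge (h : b1 ≠ b2) : dBridge d B1 b1 b2 R δ t b1 b2 = R := by
  simp [dBridge, h]

theorem le_dBridge_of_mem_of_notMem {x y : X} (hx : x ∈ B1) (hy : y ∉ B1)
    (hxy : ¬((x = b1 ∧ y = b2) ∨ (x = b2 ∧ y = b1))) (hδ : 0 ≤ δ) (ht : 0 ≤ t) :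
    (1 - t) * d x y + t * (R + δ) ≤ dBridge d B1 b1 b2 R δ t x y := by
  have hne : x ≠ y := fun h => hy (h ▸ hx)
  have hblk : ¬((x ∈ B1 ∧ y ∈ B1) ∨ (x ∉ B1 ∧ y ∉ B1)) := by tauto
  rw [dBridge, if_neg hne, if_neg hxy, if_neg hblk]
  split_ifs
  · exact le_rfl
  · nlinarith [mul_nonneg ht hδ]

end

theorem stmt14_general {X : Type*} (d : X → X → ℝ)
    (B1 : Set X)
    (b1 b2 : X) (hb2 : b2 ∈ B1ᶜ)
    (R : ℝ) (δ : ℝ) (hδ : 0 ≤ δ)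
    (hfar : ∀ x ∈ B1, ∀ y ∈ B1ᶜ, ¬(x = b1 ∧ y = b2) → R + δ ≤ d x y) :
    ∀ t, 0 ≤ t → t < 1 → ∀ x ∈ B1, ∀ y ∈ B1ᶜ,
      ((x = b1 ∧ y = b2 ∧ dBridge d B1 b1 b2 R δ t x y = R) ∨
        R + δ ≤ dBridge d B1 b1 b2 R δ t x y) ∧
      ¬(R < dBridge d B1 b1 b2 R δ t x y ∧ dBridge d B1 b1 b2 R δ t x y < R + δ) := by
  intro t ht0 ht1 x hx y hy
  have hdichotomy : (x = b1 ∧ y = b2 ∧ dBridge d B1 b1 b2 R δ t x y = R) ∨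
      R + δ ≤ dBridge d B1 b1 b2 R δ t x y := by
    by_cases hbridge : x = b1 ∧ y = b2
    · obtain ⟨rfl, rfl⟩ := hbridge
      exact Or.inl ⟨rfl, rfl, dBridge_bridge d B1 x y R δ t fun h => hy (h ▸ hx)⟩
    · have hrev : ¬(x = b2 ∧ y = b1) := fun h => hb2 (h.1 ▸ hx)
      right
      calc R + δ = (1 - t) * (R + δ) + t * (R + δ) := by ring
        _ ≤ (1 - t) * d x y + t * (R + δ) := by
          gcongr
          exact hfar x hx y hy hbridge
        _ ≤ dBridge d B1 b1 b2 R δ t x y :=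
          le_dBridge_of_mem_of_notMem d B1 b1 b2 R δ t hx hy (by tauto) hδ ht0
  refine ⟨hdichotomy, fun ⟨hlt, hgt⟩ => ?_⟩
  rcases hdichotomy with ⟨-, -, h⟩ | h <;> linarith

/-- if moreover every cross pair other than `(b₁,b₂)` is at distance
at least `R+δ` in `d`, then for every `t ∈ [0,1)` each cross distance of `d_t` is
either exactly `R` (attained only at `(b₁,b₂)`) or at least `R+δ`; in particular no
cross distance of `d_t` lies strictly between `R` and `R+δ`. -/
theorem stmt14 {X : Type*} [Fintype X] (d : X → X → ℝ) (hd : IsMetric d)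
    (B1 : Set X) (hB1 : B1.Nonempty) (hB2 : B1ᶜ.Nonempty)
    (b1 b2 : X) (hb1 : b1 ∈ B1) (hb2 : b2 ∈ B1ᶜ)
    (R : ℝ) (hR : d b1 b2 = R) (hRpos : 0 < R) (δ : ℝ) (hδ : 0 ≤ δ)
    (hfar : ∀ x ∈ B1, ∀ y ∈ B1ᶜ, ¬(x = b1 ∧ y = b2) → R + δ ≤ d x y) :
    ∀ t, 0 ≤ t → t < 1 → ∀ x ∈ B1, ∀ y ∈ B1ᶜ,
      ((x = b1 ∧ y = b2 ∧ dBridge d B1 b1 b2 R δ t x y = R) ∨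
        R + δ ≤ dBridge d B1 b1 b2 R δ t x y) ∧
      ¬(R < dBridge d B1 b1 b2 R δ t x y ∧ dBridge d B1 b1 b2 R δ t x y < R + δ) :=
  stmt14_general d B1 b1 b2 hb2 R δ hδ hfar
end

section
/- Let α ≥ 1 be an integer. Let X = B_1 ∪ B_2 where B_1 = {x_0,...,x_{α+1}} and B_2 = {y_0,...,y_{α+1}} are disjoint sets of α+2 points each, with d(x_i,x_j) = 1 and d(y_i,y_j) = 1 for all i ≠ j, d(x_0,y_0) = 2, and d(x_i,y_j) = 3 for all (i,j) ≠ (0,0). Then (X,d) is a metric space in which: (i) each of B_1 and B_2 is a set of α+2 points with all pairwise distances ≤ 2; and (ii) every subset S ⊆ X with all pairwise distances ≤ 2 that intersects both B_1 and B_2 satisfies S ⊆ {x_0,y_0}. Consequently, the largest such 'cross' subset has 2 elements while each block contains a subset of α+2 points with pairwise distances ≤ 2, so α·(|S|−1) ≤ α < α+1 for every cross subset S, i.e. the pair {B_1,B_2} fails the unchaining condition P_α of α-unchaining single linkage at scale R = 2. -/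
/-- The metric of the example witnessing that `P_α` is bridge-unchaining: two blocks
of `α+2` points each with internal distances `1`, bridged by the single edge
`(x₀,y₀)` of length `2`, all other cross distances being `3`. -/
noncomputable def dAlpha (α : ℕ) :
    (Fin (α + 2) ⊕ Fin (α + 2)) → (Fin (α + 2) ⊕ Fin (α + 2)) → ℝ
  | Sum.inl i, Sum.inl j => if i = j then 0 else 1
  | Sum.inr i, Sum.inr j => if i = j then 0 else 1
  | Sum.inl i, Sum.inr j => if i = 0 ∧ j = 0 then 2 else 3
  | Sum.inr i, Sum.inl j => if i = 0 ∧ j = 0 then 2 else 3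

/-! Every distance of `dAlpha α` lies in `{0, 1, 2, 3}`, and the triangle inequality could only
fail as `3 > 1 + 1`, which would put all three points in one block. Between the blocks only
the bridge `(x₀, y₀)` has length `≤ 2`, so a set of diameter `≤ 2` meeting both blocks can
contain no other point. -/

open Finset

section dAlpha

variable {α : ℕ}

theorem dAlpha_comm (x y : Fin (α + 2) ⊕ Fin (α + 2)) : dAlpha α x y = dAlpha α y x := by
  rcases x with i | i <;> rcases y with j | j <;> simp [dAlpha, eq_comm, and_comm]

theorem dAlpha_eq_zero_iff (x y : Fin (α + 2) ⊕ Fin (α + 2)) : dAlpha α x y = 0 ↔ x = y := by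
  rcases x with i | i <;> rcases y with j | j <;> simp only [dAlpha] <;> split_ifs <;> simp_all

theorem dAlpha_triangle (x y z : Fin (α + 2) ⊕ Fin (α + 2)) :
    dAlpha α x z ≤ dAlpha α x y + dAlpha α y z := by
  rcases x with i | i <;> rcases y with j | j <;> rcases z with k | k <;> simp only [dAlpha] <;>
    split_ifs <;> simp_all <;> norm_num

theorem isMetric_dAlpha : IsMetric (dAlpha α) :=
  ⟨dAlpha_comm, dAlpha_eq_zero_iff, dAlpha_triangle⟩

theorem dAlpha_inl_inl_le_one (i j : Fin (α + 2)) : dAlpha α (.inl i) (.inl j) ≤ 1 := by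
  simp only [dAlpha]; split_ifs <;> norm_num

theorem dAlpha_inr_inr_le_one (i j : Fin (α + 2)) : dAlpha α (.inr i) (.inr j) ≤ 1 := by
  simp only [dAlpha]; split_ifs <;> norm_num

theorem dAlpha_inl_inr_le_two_iff (i j : Fin (α + 2)) :
    dAlpha α (.inl i) (.inr j) ≤ 2 ↔ i = 0 ∧ j = 0 := by
  simp only [dAlpha]; split_ifs with h <;> norm_num [h]

theorem subset_bridge_of_forall_dAlpha_le_two {S : Finset (Fin (α + 2) ⊕ Fin (α + 2))}
    (hS : ∀ x ∈ S, ∀ y ∈ S, dAlpha α x y ≤ 2) {i j : Fin (α + 2)}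
    (hi : .inl i ∈ S) (hj : .inr j ∈ S) : S ⊆ {.inl 0, .inr 0} := by
  rintro (k | k) hk
  · simp [((dAlpha_inl_inr_le_two_iff k j).1 (hS _ hk _ hj)).1]
  · simp [((dAlpha_inl_inr_le_two_iff i k).1 (hS _ hi _ hk)).2]

end dAlpha

theorem stmt15_general (α : ℕ) :
    IsMetric (dAlpha α) ∧
    ((Finset.univ.image (Sum.inl : Fin (α + 2) → Fin (α + 2) ⊕ Fin (α + 2))).card = α + 2 ∧
     (Finset.univ.image (Sum.inr : Fin (α + 2) → Fin (α + 2) ⊕ Fin (α + 2))).card = α + 2 ∧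
     (∀ i j : Fin (α + 2), dAlpha α (Sum.inl i) (Sum.inl j) ≤ 2) ∧
     (∀ i j : Fin (α + 2), dAlpha α (Sum.inr i) (Sum.inr j) ≤ 2)) ∧
    (∀ S : Finset (Fin (α + 2) ⊕ Fin (α + 2)),
      (∀ x ∈ S, ∀ y ∈ S, dAlpha α x y ≤ 2) →
      (∃ i, Sum.inl i ∈ S) → (∃ j, Sum.inr j ∈ S) →
      (S ⊆ {Sum.inl 0, Sum.inr 0} ∧ S.card ≤ 2 ∧
        α * (S.card - 1) ≤ α ∧ α < α + 1)) := by
  refine ⟨isMetric_dAlpha, ⟨?_, ?_, ?_, ?_⟩, ?_⟩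
  · simp [card_image_of_injective _ Sum.inl_injective]
  · simp [card_image_of_injective _ Sum.inr_injective]
  · exact fun i j => (dAlpha_inl_inl_le_one i j).trans one_le_two
  · exact fun i j => (dAlpha_inr_inr_le_one i j).trans one_le_two
  · rintro S hS ⟨i, hi⟩ ⟨j, hj⟩
    have hsub := subset_bridge_of_forall_dAlpha_le_two hS hi hj
    have hcard : #S ≤ 2 := (card_le_card hsub).trans card_le_two
    exact ⟨hsub, hcard, mul_le_of_le_one_right (Nat.zero_le α) (by omega), α.lt_succ_self⟩

/-- `(X, dAlpha α)` is a metric space in which (i) each block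
`B₁ = inl(Fin (α+2))`, `B₂ = inr(Fin (α+2))` consists of `α+2` points with all
pairwise distances `≤ 2`, and (ii) every subset `S` with all pairwise distances `≤ 2`
meeting both blocks is contained in `{x₀, y₀}`; consequently every such cross subset
`S` has at most `2` elements and satisfies `α(|S|−1) ≤ α < α+1`, i.e. the pair
`{B₁,B₂}` fails the unchaining condition `P_α` at scale `R = 2`. -/
theorem stmt15 (α : ℕ) (hα : 1 ≤ α) :
    IsMetric (dAlpha α) ∧
    ((Finset.univ.image (Sum.inl : Fin (α + 2) → Fin (α + 2) ⊕ Fin (α + 2))).card = α + 2 ∧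
     (Finset.univ.image (Sum.inr : Fin (α + 2) → Fin (α + 2) ⊕ Fin (α + 2))).card = α + 2 ∧
     (∀ i j : Fin (α + 2), dAlpha α (Sum.inl i) (Sum.inl j) ≤ 2) ∧
     (∀ i j : Fin (α + 2), dAlpha α (Sum.inr i) (Sum.inr j) ≤ 2)) ∧
    (∀ S : Finset (Fin (α + 2) ⊕ Fin (α + 2)),
      (∀ x ∈ S, ∀ y ∈ S, dAlpha α x y ≤ 2) →
      (∃ i, Sum.inl i ∈ S) → (∃ j, Sum.inr j ∈ S) →
      (S ⊆ {Sum.inl 0, Sum.inr 0} ∧ S.card ≤ 2 ∧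
        α * (S.card - 1) ≤ α ∧ α < α + 1)) :=
  stmt15_general α
end

section
/- Complete linkage and average linkage hierarchical clustering are faithful: for every finite ultrametric space (U,u), the standard linkage-based recursions with linkage functions ℓ^CL and ℓ^AL produce the same dendrogram as single linkage, and their output ultrametric spaces equal (U,u) itself: 𝔗^CL_U(U,u) = (U,u) and 𝔗^AL_U(U,u) = (U,u). -/
open Classical in
/-- The block (equivalence class) of `x` under the relation `e`. -/
noncomputable def cls {X : Type*} [Fintype X] (e : X → X → Prop) (x : X) : Finset X :=
  Finset.univ.filter fun y => e x y

/-- The minimal linkage value `R_i = min{ℓ(B,B') : B ≠ B' ∈ Θ_i}` over pairs of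
distinct blocks of the partition given by the relation `e`. -/
noncomputable def nextR {X : Type*} [Fintype X] (ℓ : Finset X → Finset X → ℝ)
    (e : X → X → Prop) : ℝ :=
  sInf { r | ∃ x y : X, ¬ e x y ∧ ℓ (cls e x) (cls e y) = r }

/-- Merge the blocks of `e` along the equivalence relation generated by
`ℓ(B,B') ≤ R` on blocks. -/
def mergeRel {X : Type*} [Fintype X] (ℓ : Finset X → Finset X → ℝ)
    (e : X → X → Prop) (R : ℝ) : X → X → Prop :=
  Relation.EqvGen fun a b => e a b ∨ ℓ (cls e a) (cls e b) ≤ R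

open Classical in
/-- One step of the standard linkage-based recursion; the state is the pair
(current partition, given as a relation; current merging scale).  Once the partition
is the one-block partition the state is frozen. -/
noncomputable def stdStep {X : Type*} [Fintype X] (ℓ : Finset X → Finset X → ℝ) :
    (X → X → Prop) × ℝ → (X → X → Prop) × ℝ :=
  fun s => if ∀ x y, s.1 x y then s else (mergeRel ℓ s.1 (nextR ℓ s.1), nextR ℓ s.1)

/-- The sequence of states `(Θ_{i+1}, R_i)` of the standard linkage-based recursion
`𝔗(ℓ,∅)`, starting with the partition into singletons at scale `R₀ = 0`. -/
noncomputable def stdState {X : Type*} [Fintype X] (ℓ : Finset X → Finset X → ℝ) :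
    ℕ → (X → X → Prop) × ℝ
  | 0 => (Eq, 0)
  | i + 1 => stdStep ℓ (stdState ℓ i)

/-- The dendrogram of the standard linkage-based method: `x ∼ y` at scale `r` iff
they lie in a common block of `θ(r) = Θ_{max{i : R_i ≤ r}}` (for the nested partitions
`Θ_i` this is equivalent to lying in a common block of some `Θ_i` with `R_i ≤ r`). -/
def dendroRel {X : Type*} [Fintype X] (ℓ : Finset X → Finset X → ℝ) (r : ℝ)
    (x y : X) : Prop :=
  ∃ i, (stdState ℓ i).2 ≤ r ∧ (stdState ℓ i).1 x y

/-- The output ultrametric of the standard linkage-based method `𝔗(ℓ,∅)`: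
`u(x,y)` is the least scale `r ≥ 0` at which `x` and `y` lie in a common block of
the dendrogram. -/
noncomputable def stdUltra {X : Type*} [Fintype X] (ℓ : Finset X → Finset X → ℝ)
    (x y : X) : ℝ :=
  sInf { r | 0 ≤ r ∧ dendroRel ℓ r x y }

/-!
In an ultrametric space the closed balls of a fixed radius `r ≥ 0` partition the space, and
any two points of two distinct such balls are at the same distance. Hence single, complete and
average linkage all return that common distance on a pair of `r`-balls, so each of the three
recursions passes, one distance value at a time, through the partitions into closed balls of
radii `0 = r₀ < r₁ < ⋯`, the distinct values of `u`. The dendrogram at scale `r` is therefore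
`u x y ≤ r` in all three cases, and its ultrametric is `u`.
-/

namespace IsUltrametricD

variable {X : Type*} {d : X → X → ℝ}

lemma self_eq_zero (hd : IsUltrametricD d) (x : X) : d x x = 0 :=
  (hd.1.2.1 x x).2 rfl

lemma nonneg (hd : IsUltrametricD d) (x y : X) : 0 ≤ d x y := by
  have h := hd.1.2.2 x y x
  rw [hd.self_eq_zero, hd.1.1 y x] at h
  linarith

lemma dist_eq_of_le_of_le_of_lt (hd : IsUltrametricD d) {r : ℝ} {x y a b : X}
    (ha : d x a ≤ r) (hb : d y b ≤ r) (hxy : r < d x y) : d a b = d x y := by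
  obtain ⟨⟨hsymm, -, -⟩, hmax⟩ := hd
  have hax : d a x ≤ r := hsymm a x ▸ ha
  have hby : d b y ≤ r := hsymm b y ▸ hb
  apply le_antisymm
  · calc d a b ≤ max (d a x) (max (d x y) (d y b)) :=
          (hmax a x b).trans (max_le_max le_rfl (hmax x y b))
      _ ≤ d x y := max_le (hax.trans hxy.le) (max_le le_rfl (hb.trans hxy.le))
  · have h := (hmax x a y).trans (max_le_max le_rfl (hmax a b y))
    rcases le_max_iff.1 h with h | h
    · linarith
    rcases le_max_iff.1 h with h | h
    · exact h
    · linarith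

end IsUltrametricD

section Balls

variable {X : Type*} {d : X → X → ℝ}

def ballRel (d : X → X → ℝ) (r : ℝ) (x y : X) : Prop := d x y ≤ r

lemma ballRel_equivalence (hd : IsUltrametricD d) {r : ℝ} (hr : 0 ≤ r) :
    Equivalence (ballRel d r) where
  refl x := (hd.self_eq_zero x).trans_le hr
  symm {x y} h := (hd.1.1 y x).trans_le h
  trans {x y z} hxy hyz := (hd.2 x y z).trans (max_le hxy hyz)

lemma ballRel_zero (hd : IsUltrametricD d) : ballRel d 0 = Eq := by
  funext x y
  refine propext ⟨fun h => (hd.1.2.1 x y).1 (le_antisymm h (hd.nonneg x y)), ?_⟩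
  rintro rfl
  exact (hd.self_eq_zero x).le

variable [Fintype X]

lemma mem_cls_ballRel {r : ℝ} {x a : X} : a ∈ cls (ballRel d r) x ↔ d x a ≤ r := by
  classical
  rw [cls, Finset.mem_filter]
  exact and_iff_right (Finset.mem_univ a)

lemma self_mem_cls_ballRel (hd : IsUltrametricD d) {r : ℝ} (hr : 0 ≤ r) (x : X) :
    x ∈ cls (ballRel d r) x :=
  mem_cls_ballRel.2 ((hd.self_eq_zero x).trans_le hr)

lemma crossDists_cls_ballRel (hd : IsUltrametricD d) {r : ℝ} (hr : 0 ≤ r) {x y : X}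
    (hxy : r < d x y) :
    {v | ∃ a ∈ cls (ballRel d r) x, ∃ b ∈ cls (ballRel d r) y, d a b = v} = {d x y} := by
  ext v
  refine ⟨?_, ?_⟩
  · rintro ⟨a, ha, b, hb, rfl⟩
    exact hd.dist_eq_of_le_of_le_of_lt (mem_cls_ballRel.1 ha) (mem_cls_ballRel.1 hb) hxy
  · rintro rfl
    exact ⟨x, self_mem_cls_ballRel hd hr x, y, self_mem_cls_ballRel hd hr y, rfl⟩

def IsFaithfulOnBalls (d : X → X → ℝ) (ℓ : Finset X → Finset X → ℝ) : Prop :=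
  ∀ r, 0 ≤ r → ∀ x y, r < d x y → ℓ (cls (ballRel d r) x) (cls (ballRel d r) y) = d x y

lemma isFaithfulOnBalls_ellSL (hd : IsUltrametricD d) : IsFaithfulOnBalls d (ellSL d) := by
  intro r hr x y hxy
  rw [ellSL, crossDists_cls_ballRel hd hr hxy, csInf_singleton]

lemma isFaithfulOnBalls_ellCL (hd : IsUltrametricD d) : IsFaithfulOnBalls d (ellCL d) := by
  intro r hr x y hxy
  rw [ellCL, crossDists_cls_ballRel hd hr hxy, csSup_singleton]

lemma isFaithfulOnBalls_ellAL (hd : IsUltrametricD d) : IsFaithfulOnBalls d (ellAL d) := by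
  intro r hr x y hxy
  have hsum : ∑ a ∈ cls (ballRel d r) x, ∑ b ∈ cls (ballRel d r) y, d a b =
      (cls (ballRel d r) x).card * (cls (ballRel d r) y).card * d x y := by
    rw [Finset.sum_congr rfl fun a ha => Finset.sum_congr rfl fun b hb =>
      hd.dist_eq_of_le_of_le_of_lt (mem_cls_ballRel.1 ha) (mem_cls_ballRel.1 hb) hxy]
    simp only [Finset.sum_const, nsmul_eq_mul, mul_assoc]
  have hx := Finset.card_ne_zero_of_mem (self_mem_cls_ballRel hd hr x)
  have hy := Finset.card_ne_zero_of_mem (self_mem_cls_ballRel hd hr y)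
  rw [ellAL, hsum, mul_div_cancel_left₀ _ (by positivity)]

lemma mergeRel_ballRel (hd : IsUltrametricD d) {ℓ : Finset X → Finset X → ℝ}
    (hℓ : IsFaithfulOnBalls d ℓ) {r R : ℝ} (hr : 0 ≤ r) (hrR : r ≤ R) :
    mergeRel ℓ (ballRel d r) R = ballRel d R := by
  have hgen :
      (fun a b => ballRel d r a b ∨ ℓ (cls (ballRel d r) a) (cls (ballRel d r) b) ≤ R) =
        ballRel d R := by
    funext a b
    rcases le_or_gt (d a b) r with hab | hab
    · exact propext ⟨fun _ => hab.trans hrR, fun _ => Or.inl hab⟩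
    · simp only [ballRel, hℓ r hr a b hab, not_le.2 hab, false_or]
  funext a b
  rw [mergeRel, hgen, (ballRel_equivalence hd (hr.trans hrR)).eqvGen_iff]

lemma finite_distSet (d : X → X → ℝ) (p : X → X → Prop) :
    {v | ∃ x y, p x y ∧ d x y = v}.Finite :=
  (Set.finite_range fun q : X × X => d q.1 q.2).subset
    (by rintro _ ⟨a, b, -, rfl⟩; exact ⟨(a, b), rfl⟩)

noncomputable def nextDist (d : X → X → ℝ) (r : ℝ) : ℝ :=
  sInf {v | ∃ x y, r < d x y ∧ d x y = v}

lemma nextDist_le {r : ℝ} {x y : X} (h : r < d x y) : nextDist d r ≤ d x y :=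
  csInf_le (finite_distSet d _).bddBelow ⟨x, y, h, rfl⟩

lemma exists_eq_nextDist {r : ℝ} (h : ¬ ∀ x y, d x y ≤ r) :
    ∃ x y, r < d x y ∧ d x y = nextDist d r := by
  simp only [not_forall, not_le] at h
  obtain ⟨x, y, hxy⟩ := h
  exact Set.Nonempty.csInf_mem (s := {v | ∃ x y, r < d x y ∧ d x y = v})
    ⟨d x y, x, y, hxy, rfl⟩ (finite_distSet d _)

lemma lt_nextDist {r : ℝ} (h : ¬ ∀ x y, d x y ≤ r) : r < nextDist d r := by
  obtain ⟨x, y, hlt, heq⟩ := exists_eq_nextDist h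
  exact heq ▸ hlt

open Classical in
/-- The merge scales `R_i` of the linkage recursion on an ultrametric `d`: the distinct values
of `d` in increasing order, then constant. -/
noncomputable def distScale (d : X → X → ℝ) : ℕ → ℝ
  | 0 => 0
  | i + 1 => if ∀ x y, d x y ≤ distScale d i then distScale d i else nextDist d (distScale d i)

lemma distScale_nonneg : ∀ i, 0 ≤ distScale d i
  | 0 => le_rfl
  | i + 1 => by
    rw [distScale]
    split_ifs with h
    · exact distScale_nonneg i
    · exact (distScale_nonneg i).trans (lt_nextDist h).le

lemma stdState_eq (hd : IsUltrametricD d) {ℓ : Finset X → Finset X → ℝ}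
    (hℓ : IsFaithfulOnBalls d ℓ) (i : ℕ) :
    stdState ℓ i = (ballRel d (distScale d i), distScale d i) := by
  induction i with
  | zero => rw [stdState, distScale, ballRel_zero hd]
  | succ i ih =>
    have hr := distScale_nonneg (d := d) i
    rw [stdState, ih, stdStep, distScale]
    dsimp only
    by_cases h : ∀ x y, d x y ≤ distScale d i
    · rw [if_pos h, if_pos (c := ∀ x y, ballRel d _ x y) h]
    · have hR : nextR ℓ (ballRel d (distScale d i)) = nextDist d (distScale d i) := by
        rw [nextR, nextDist]
        congr 1
        ext v
        simp only [ballRel, not_le]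
        exact exists₂_congr fun x y => and_congr_right fun hxy => by rw [hℓ _ hr x y hxy]
      rw [if_neg h, if_neg (c := ∀ x y, ballRel d _ x y) h, hR,
        mergeRel_ballRel hd hℓ hr (lt_nextDist h).le]

lemma exists_forall_le_distScale : ∃ N, ∀ x y, d x y ≤ distScale d N := by
  by_contra hcover
  simp only [not_exists] at hcover
  have hsucc : ∀ i, distScale d (i + 1) = nextDist d (distScale d i) := fun i => by
    rw [distScale, if_neg (hcover i)]
  have hmono : StrictMono (distScale d) :=
    strictMono_nat_of_lt_succ fun i => hsucc i ▸ lt_nextDist (hcover i)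
  -- Past `r₀`, the scales are values of `d`, so they cannot increase forever.
  refine Set.infinite_range_of_injective (hmono.injective.comp Nat.succ_injective)
    ((finite_distSet d fun _ _ => True).subset ?_)
  rintro _ ⟨i, rfl⟩
  obtain ⟨x, y, -, hxy⟩ := exists_eq_nextDist (hcover i)
  exact ⟨x, y, trivial, hxy.trans (hsucc i).symm⟩

lemma exists_distScale_eq (hd : IsUltrametricD d) (x y : X) : ∃ i, distScale d i = d x y := by
  classical
  obtain ⟨N, hN⟩ := exists_forall_le_distScale (d := d)
  have hex : ∃ i, d x y ≤ distScale d i := ⟨N, hN x y⟩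
  refine ⟨Nat.find hex, le_antisymm ?_ (Nat.find_spec hex)⟩
  cases hi : Nat.find hex with
  | zero => exact hd.nonneg x y
  | succ j =>
    have hj : ¬ d x y ≤ distScale d j := Nat.find_min hex (by omega)
    rw [distScale, if_neg fun h => hj (h x y)]
    exact nextDist_le (not_le.1 hj)

lemma dendroRel_iff (hd : IsUltrametricD d) {ℓ : Finset X → Finset X → ℝ}
    (hℓ : IsFaithfulOnBalls d ℓ) (r : ℝ) (x y : X) : dendroRel ℓ r x y ↔ d x y ≤ r := by
  simp only [dendroRel, stdState_eq hd hℓ, ballRel]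
  refine ⟨fun ⟨i, hir, hxy⟩ => hxy.trans hir, fun hxy => ?_⟩
  obtain ⟨i, hi⟩ := exists_distScale_eq hd x y
  exact ⟨i, hi.trans_le hxy, hi.ge⟩

lemma stdUltra_eq (hd : IsUltrametricD d) {ℓ : Finset X → Finset X → ℝ}
    (hℓ : IsFaithfulOnBalls d ℓ) (x y : X) : stdUltra ℓ x y = d x y := by
  have hscales : {r | 0 ≤ r ∧ dendroRel ℓ r x y} = Set.Ici (d x y) := by
    ext r
    simp only [Set.mem_ofPred_eq, Set.mem_Ici, dendroRel_iff hd hℓ]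
    exact and_iff_right_of_imp (hd.nonneg x y).trans
  rw [stdUltra, hscales, csInf_Ici]

end Balls

theorem stmt16_general {U : Type*} [Fintype U] (u : U → U → ℝ)
    (hu : IsUltrametricD u) :
    (∀ r : ℝ, ∀ x y : U,
      (dendroRel (ellCL u) r x y ↔ dendroRel (ellSL u) r x y) ∧
      (dendroRel (ellAL u) r x y ↔ dendroRel (ellSL u) r x y)) ∧
    (∀ x y, stdUltra (ellCL u) x y = u x y) ∧
    (∀ x y, stdUltra (ellAL u) x y = u x y) := by
  have hSL := dendroRel_iff hu (isFaithfulOnBalls_ellSL hu)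
  have hCL := isFaithfulOnBalls_ellCL hu
  have hAL := isFaithfulOnBalls_ellAL hu
  refine ⟨fun r x y => ⟨?_, ?_⟩, stdUltra_eq hu hCL, stdUltra_eq hu hAL⟩
  · rw [dendroRel_iff hu hCL, hSL]
  · rw [dendroRel_iff hu hAL, hSL]

/-- complete linkage and average linkage are faithful: on a finite
ultrametric space `(U,u)`, the standard linkage-based recursions for `ℓ^CL` and
`ℓ^AL` produce the same dendrogram as single linkage `ℓ^SL`, and their output
ultrametrics are `u` itself. -/
theorem stmt16 {U : Type*} [Fintype U] [Nonempty U] (u : U → U → ℝ)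
    (hu : IsUltrametricD u) :
    (∀ r : ℝ, ∀ x y : U,
      (dendroRel (ellCL u) r x y ↔ dendroRel (ellSL u) r x y) ∧
      (dendroRel (ellAL u) r x y ↔ dendroRel (ellSL u) r x y)) ∧
    (∀ x y, stdUltra (ellCL u) x y = u x y) ∧
    (∀ x y, stdUltra (ellAL u) x y = u x y) :=
  stmt16_general u hu
end
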